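/- Let k be a field, A a finite-dimensional k-algebra, P a finitely generated projective left A-module, and B = End_A(P)^op. Then the following are equivalent: (i) the canonical algebra map A → End_B(Hom_A(P, A))^op, sending a ∈ A to the B-endomorphism f ↦ (p ↦ f(p)·a), is an isomorphism of k-algebras; (ii) for every finitely generated projective left A-module M, the unit map M → Hom_B(Hom_A(P, A), Hom_A(P, M)), sending m to the B-linear map f ↦ (p ↦ f(p)·m), is an isomorphism of A-modules; (iii) for all finitely generated projective left A-modules M, N, the natural map Hom_A(M, N) → Hom_B(Hom_A(P, M), Hom_A(P, N)), g ↦ (f ↦ g ∘ f), is bijective. -/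

import Mathlib

universe u

open MulOpposite

set_option synthInstance.maxHeartbeats 400000
set_option maxHeartbeats 1000000

/-- `(A, P)` is a cover of `B = End_A(P)ᵒᵖ`: the Schur functor `Hom_A(P, -)` is fully
faithful on finitely generated projective `A`-modules.  Here a map
`Φ : Hom_A(P, M) → Hom_A(P, N)` is `B`-linear iff it is additive and commutes with
precomposition by every `A`-endomorphism of `P`, so the condition says that for all
finitely generated projective `M`, `N` the natural map
`Hom_A(M, N) → Hom_B(Hom_A(P, M), Hom_A(P, N))`, `g ↦ (f ↦ g ∘ f)`, is bijective. -/
def IsCover (A : Type u) [Ring A] (P : Type u) [AddCommGroup P] [Module A P] : Prop :=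
  ∀ (M N : Type u) [AddCommGroup M] [Module A M] [AddCommGroup N] [Module A N],
    Module.Finite A M → Module.Projective A M →
    Module.Finite A N → Module.Projective A N →
    (Function.Injective fun (g : M →ₗ[A] N) => fun f : P →ₗ[A] M => g ∘ₗ f) ∧
    (∀ Φ : (P →ₗ[A] M) → (P →ₗ[A] N),
      (∀ f₁ f₂, Φ (f₁ + f₂) = Φ f₁ + Φ f₂) →
      (∀ (f : P →ₗ[A] M) (g : P →ₗ[A] P), Φ (f ∘ₗ g) = Φ f ∘ₗ g) →
      ∃ g : M →ₗ[A] N, ∀ f, Φ f = g ∘ₗ f)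

section Helpers
variable (A P : Type u) [Ring A] [AddCommGroup P] [Module A P]

/-- The right multiplication `f ↦ f(-) · a` on `Hom_A(P, A)`; the canonical algebra map
`A → End_B(Hom_A(P, A))ᵒᵖ` sends `a` to this map. -/
def postMulMap (a : A) (f : P →ₗ[A] A) : P →ₗ[A] A where
  toFun p := f p * a
  map_add' p q := by simp [add_mul]
  map_smul' c p := by simp [mul_assoc]

/-- The unit `M → Hom_B(Hom_A(P, A), Hom_A(P, M))` of the adjunction: it sends `m` to
the `B`-linear map `f ↦ (p ↦ f p • m)`. -/
def unitApply (M : Type u) [AddCommGroup M] [Module A M] (m : M) (f : P →ₗ[A] A) :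
    P →ₗ[A] M where
  toFun p := f p • m
  map_add' p q := by simp [add_smul]
  map_smul' c p := by simp [mul_smul]
end Helpers

/-! Call `M` unit-bijective when the unit `M → Hom_B(Hom_A(P, A), Hom_A(P, M))` is bijective;
(i) says exactly that `A` is unit-bijective. Unit-bijectivity passes to products and to
retracts, hence from `A` to every finitely generated projective module: (i) ⇔ (ii).
If `M` is a retract of `Aⁿ`, with coordinates `xⱼ : M → A` and generators `mⱼ`, every
`f : P → M` is `∑ⱼ (xⱼ ∘ f)(-) • mⱼ`. So a `B`-linear `Φ` is determined by the `B`-linear maps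
`h ↦ Φ (h(-) • mⱼ)` on `Hom_A(P, A)`, which unit-bijectivity of `N` writes as `h ↦ h(-) • nⱼ`;
then `Φ` is composition with `m ↦ ∑ⱼ xⱼ(m) • nⱼ`, giving (ii) ⇒ (iii). Conversely (iii) with
source `A` is (ii), as `Hom_A(A, M) = M`. -/

section

variable (A P : Type u) [Ring A] [AddCommGroup P] [Module A P]

def IsUnitBijective (M : Type u) [AddCommGroup M] [Module A M] : Prop :=
  Function.Injective (unitApply A P M) ∧
    ∀ Φ : (P →ₗ[A] A) → (P →ₗ[A] M),
      (∀ f₁ f₂, Φ (f₁ + f₂) = Φ f₁ + Φ f₂) →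
      (∀ (f : P →ₗ[A] A) (g : P →ₗ[A] P), Φ (f ∘ₗ g) = Φ f ∘ₗ g) →
      ∃ m : M, ∀ f, Φ f = unitApply A P M m f

variable {A P} {M N : Type u} [AddCommGroup M] [Module A M] [AddCommGroup N] [Module A N]

@[simp]
lemma unitApply_apply (m : M) (f : P →ₗ[A] A) (p : P) : unitApply A P M m f p = f p • m := rfl

lemma unitApply_eq_comp (m : M) (f : P →ₗ[A] A) :
    unitApply A P M m f = LinearMap.toSpanSingleton A M m ∘ₗ f := rfl

lemma unitApply_map (g : M →ₗ[A] N) (m : M) (f : P →ₗ[A] A) :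
    unitApply A P N (g m) f = g ∘ₗ unitApply A P M m f := by
  ext p
  simp

lemma unitApply_add (m : M) (f₁ f₂ : P →ₗ[A] A) :
    unitApply A P M m (f₁ + f₂) = unitApply A P M m f₁ + unitApply A P M m f₂ := by
  ext p
  simp [add_smul]

lemma unitApply_comp (m : M) (f : P →ₗ[A] A) (g : P →ₗ[A] P) :
    unitApply A P M m (f ∘ₗ g) = unitApply A P M m f ∘ₗ g := rfl

namespace IsUnitBijective

lemma of_retract {M' : Type u} [AddCommGroup M'] [Module A M'] (h : IsUnitBijective A P M')
    (π : M' →ₗ[A] M) (i : M →ₗ[A] M') (hπi : π ∘ₗ i = .id) : IsUnitBijective A P M := by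
  obtain ⟨hinj, hsurj⟩ := h
  refine ⟨fun m₁ m₂ heq => ?_, fun Φ hadd hcomp => ?_⟩
  · refine i.injective_of_comp_eq_id π hπi (hinj ?_)
    funext f
    rw [unitApply_map, unitApply_map, heq]
  · obtain ⟨m', hm'⟩ := hsurj (fun f => i ∘ₗ Φ f)
      (fun f₁ f₂ => by rw [hadd, LinearMap.comp_add])
      (fun f g => by rw [hcomp, LinearMap.comp_assoc])
    refine ⟨π m', fun f => ?_⟩
    rw [unitApply_map, ← hm', ← LinearMap.comp_assoc, hπi, LinearMap.id_comp]

lemma pi {ι : Type} {M : ι → Type u} [∀ j, AddCommGroup (M j)] [∀ j, Module A (M j)]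
    (h : ∀ j, IsUnitBijective A P (M j)) : IsUnitBijective A P (∀ j, M j) := by
  refine ⟨fun m₁ m₂ heq => funext fun j => (h j).1 ?_, fun Φ hadd hcomp => ?_⟩
  · funext f
    rw [← LinearMap.proj_apply (R := A) j m₁, ← LinearMap.proj_apply (R := A) j m₂,
      unitApply_map, unitApply_map, heq]
  · choose m hm using fun j => (h j).2 (fun f => LinearMap.proj j ∘ₗ Φ f)
      (fun f₁ f₂ => by rw [hadd, LinearMap.comp_add])
      (fun f g => by rw [hcomp, LinearMap.comp_assoc])
    refine ⟨m, fun f => ?_⟩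
    ext p j
    exact LinearMap.congr_fun (hm j f) p

lemma of_projective (hA : IsUnitBijective A P A) (M : Type u) [AddCommGroup M] [Module A M]
    [Module.Finite A M] [Module.Projective A M] : IsUnitBijective A P M :=
  have ⟨_, π, i, _, _, hπi⟩ := Module.Finite.exists_comp_eq_id_of_projective A M
  (pi fun _ => hA).of_retract π i hπi

end IsUnitBijective

lemma eq_sum_unitApply_of_retract {ι : Type*} [Fintype ι] [DecidableEq ι]
    (π : (ι → A) →ₗ[A] M) (i : M →ₗ[A] ι → A) (hπi : π ∘ₗ i = .id) (f : P →ₗ[A] M) :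
    f = ∑ j, unitApply A P M (π (Pi.single j 1)) (LinearMap.proj j ∘ₗ i ∘ₗ f) := by
  ext p
  simp only [LinearMap.sum_apply, unitApply_apply, LinearMap.comp_apply, LinearMap.proj_apply,
    ← map_smul, ← map_sum, ← Pi.single_smul, smul_eq_mul, mul_one, Finset.univ_sum_single]
  exact (LinearMap.congr_fun hπi (f p)).symm

lemma comp_left_injective_of_injective_unitApply (h : Function.Injective (unitApply A P N)) :
    Function.Injective fun (g : M →ₗ[A] N) (f : P →ₗ[A] M) => g ∘ₗ f := by
  intro g g' heq
  ext m
  apply h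
  funext f
  rw [unitApply_map, unitApply_map]
  exact congrFun heq _

lemma IsUnitBijective.exists_comp_eq (hN : IsUnitBijective A P N) [Module.Finite A M]
    [Module.Projective A M] (Φ : (P →ₗ[A] M) → (P →ₗ[A] N))
    (hadd : ∀ f₁ f₂, Φ (f₁ + f₂) = Φ f₁ + Φ f₂)
    (hcomp : ∀ (f : P →ₗ[A] M) (g : P →ₗ[A] P), Φ (f ∘ₗ g) = Φ f ∘ₗ g) :
    ∃ g : M →ₗ[A] N, ∀ f, Φ f = g ∘ₗ f := by
  classical
  obtain ⟨n, π, i, -, -, hπi⟩ := Module.Finite.exists_comp_eq_id_of_projective A M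
  choose v hv using fun j => hN.2 (fun h => Φ (unitApply A P M (π (Pi.single j 1)) h))
    (fun f₁ f₂ => by rw [unitApply_add, hadd]) (fun f g => by rw [unitApply_comp, hcomp])
  refine ⟨Fintype.linearCombination A v ∘ₗ i, fun f => ?_⟩
  calc Φ f = Φ (∑ j, unitApply A P M (π (Pi.single j 1)) (LinearMap.proj j ∘ₗ i ∘ₗ f)) :=
        congrArg Φ (eq_sum_unitApply_of_retract π i hπi f)
    _ = ∑ j, unitApply A P N (v j) (LinearMap.proj j ∘ₗ i ∘ₗ f) :=
        (map_sum (AddMonoidHom.mk' Φ hadd) _ _).trans (Finset.sum_congr rfl fun j _ => hv j _)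
    _ = (Fintype.linearCombination A v ∘ₗ i) ∘ₗ f := by
        ext p
        simp [Fintype.linearCombination_apply]

lemma isCover_of_forall_isUnitBijective
    (h : ∀ (M : Type u) [AddCommGroup M] [Module A M],
      Module.Finite A M → Module.Projective A M → IsUnitBijective A P M) :
    IsCover A P :=
  fun _ N _ _ _ _ _ _ hfN hpN =>
    ⟨comp_left_injective_of_injective_unitApply (h N hfN hpN).1, (h N hfN hpN).exists_comp_eq⟩

lemma isUnitBijective_of_isCover (hc : IsCover A P) (M : Type u) [AddCommGroup M] [Module A M]
    [Module.Finite A M] [Module.Projective A M] : IsUnitBijective A P M := by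
  obtain ⟨hinj, hfull⟩ := hc A M inferInstance inferInstance inferInstance inferInstance
  refine ⟨fun m₁ m₂ heq => LinearMap.toSpanSingleton_injective A M (hinj heq),
    fun Φ hadd hcomp => ?_⟩
  obtain ⟨g, hg⟩ := hfull Φ hadd hcomp
  refine ⟨g 1, fun f => ?_⟩
  rw [hg, unitApply_eq_comp, LinearMap.ext_ring (LinearMap.toSpanSingleton_apply_one A M (g 1))]

end

theorem cover_tfae_general
    (A P : Type u) [Ring A]
    [AddCommGroup P] [Module A P] :
    ((Function.Injective (postMulMap A P) ∧
      (∀ Φ : (P →ₗ[A] A) → (P →ₗ[A] A),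
        (∀ f₁ f₂, Φ (f₁ + f₂) = Φ f₁ + Φ f₂) →
        (∀ (f : P →ₗ[A] A) (g : P →ₗ[A] P), Φ (f ∘ₗ g) = Φ f ∘ₗ g) →
        ∃ a : A, ∀ f, Φ f = postMulMap A P a f)) ↔
     (∀ (M : Type u) [AddCommGroup M] [Module A M],
        Module.Finite A M → Module.Projective A M →
        Function.Injective (unitApply A P M) ∧
        (∀ Φ : (P →ₗ[A] A) → (P →ₗ[A] M),
          (∀ f₁ f₂, Φ (f₁ + f₂) = Φ f₁ + Φ f₂) →
          (∀ (f : P →ₗ[A] A) (g : P →ₗ[A] P), Φ (f ∘ₗ g) = Φ f ∘ₗ g) →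
          ∃ m : M, ∀ f, Φ f = unitApply A P M m f))) ∧
    ((∀ (M : Type u) [AddCommGroup M] [Module A M],
        Module.Finite A M → Module.Projective A M →
        Function.Injective (unitApply A P M) ∧
        (∀ Φ : (P →ₗ[A] A) → (P →ₗ[A] M),
          (∀ f₁ f₂, Φ (f₁ + f₂) = Φ f₁ + Φ f₂) →
          (∀ (f : P →ₗ[A] A) (g : P →ₗ[A] P), Φ (f ∘ₗ g) = Φ f ∘ₗ g) →
          ∃ m : M, ∀ f, Φ f = unitApply A P M m f)) ↔
     IsCover A P) :=
  -- `unitApply A P A` and `postMulMap A P` agree definitionally, so (i) is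
  -- `IsUnitBijective A P A`.
  ⟨⟨fun hA M _ _ _ _ => IsUnitBijective.of_projective hA M,
      fun h => h A inferInstance inferInstance⟩,
    ⟨isCover_of_forall_isUnitBijective, fun hc M _ _ _ _ => isUnitBijective_of_isCover hc M⟩⟩

/-- **(Rouquier).** For a finitely generated projective module `P` over a
finite-dimensional `k`-algebra `A`, with `B = End_A(P)ᵒᵖ` (where a map between
`Hom_A(P, M)`'s is `B`-linear iff it is additive and commutes with precomposition by
all `A`-endomorphisms of `P`), the following are equivalent:
(i) the canonical algebra map `A → End_B(Hom_A(P, A))ᵒᵖ`, `a ↦ (f ↦ f(-)·a)`, is an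
isomorphism; (ii) for every finitely generated projective `M`, the unit
`M → Hom_B(Hom_A(P, A), Hom_A(P, M))` is an isomorphism of `A`-modules;
(iii) the Schur functor `Hom_A(P, -)` is fully faithful on finitely generated
projectives. -/
theorem cover_tfae
    (k A P : Type u) [Field k] [Ring A] [Algebra k A] [FiniteDimensional k A]
    [AddCommGroup P] [Module A P] [Module.Finite A P]
    (hproj : Module.Projective A P) :
    ((Function.Injective (postMulMap A P) ∧
      (∀ Φ : (P →ₗ[A] A) → (P →ₗ[A] A),
        (∀ f₁ f₂, Φ (f₁ + f₂) = Φ f₁ + Φ f₂) →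
        (∀ (f : P →ₗ[A] A) (g : P →ₗ[A] P), Φ (f ∘ₗ g) = Φ f ∘ₗ g) →
        ∃ a : A, ∀ f, Φ f = postMulMap A P a f)) ↔
     (∀ (M : Type u) [AddCommGroup M] [Module A M],
        Module.Finite A M → Module.Projective A M →
        Function.Injective (unitApply A P M) ∧
        (∀ Φ : (P →ₗ[A] A) → (P →ₗ[A] M),
          (∀ f₁ f₂, Φ (f₁ + f₂) = Φ f₁ + Φ f₂) →
          (∀ (f : P →ₗ[A] A) (g : P →ₗ[A] P), Φ (f ∘ₗ g) = Φ f ∘ₗ g) →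
          ∃ m : M, ∀ f, Φ f = unitApply A P M m f))) ∧
    ((∀ (M : Type u) [AddCommGroup M] [Module A M],
        Module.Finite A M → Module.Projective A M →
        Function.Injective (unitApply A P M) ∧
        (∀ Φ : (P →ₗ[A] A) → (P →ₗ[A] M),
          (∀ f₁ f₂, Φ (f₁ + f₂) = Φ f₁ + Φ f₂) →
          (∀ (f : P →ₗ[A] A) (g : P →ₗ[A] P), Φ (f ∘ₗ g) = Φ f ∘ₗ g) →
          ∃ m : M, ∀ f, Φ f = unitApply A P M m f)) ↔
     IsCover A P) :=
  cover_tfae_general A P
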